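/- Let μ be a centred probability measure on ℝ with distribution function F, b < 0 < b̄, let ρ₋(0) ∈ (F(b),1] satisfy m^{ρ₋(0)} = b (barycentre of the lowest ρ₋(0) quantile mass is b), and suppose π* ∈ [ρ₋(0), F(b̄−)) satisfies m̃_{π*}^{F(b̄−)} + b̄(1−F(b̄−)+π*) = 0. Define ν = (ρ₋(0)·δ_b + μ_{ρ₋(0)}^{π*} + μ_{F(b̄−)})/(1−F(b̄−)+π*). Then ν has barycentre b̄, i.e. (1−F(b̄−)+π*)∫x dν(x) = b̄(1−F(b̄−)+π*). -/

import Mathlib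

open MeasureTheory Set

/-- Distribution function of `μ`. -/
noncomputable def distF (μ : Measure ℝ) (x : ℝ) : ℝ := (μ (Iic x)).toReal

/-- Left limit `F(x-)` of the distribution function. -/
noncomputable def distFm (μ : Measure ℝ) (x : ℝ) : ℝ := (μ (Iio x)).toReal

/-- Quantile function of `μ`. -/
noncomputable def quantile (μ : Measure ℝ) (u : ℝ) : ℝ :=
  sInf {x : ℝ | u ≤ distF μ x}

/-- The sub-probability measure `μ_p^q`, i.e. `μ` restricted to its quantile range `(p,q]`,
realised as the image under the quantile function of Lebesgue measure on `(p,q]`. -/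
noncomputable def qmeas (μ : Measure ℝ) (p q : ℝ) : Measure ℝ :=
  (volume.restrict (Ioc p q)).map (quantile μ)

/-- `m̃_p^q = ∫ x dμ_p^q`. -/
noncomputable def mtil (μ : Measure ℝ) (p q : ℝ) : ℝ :=
  ∫ u in Ioc p q, quantile μ u

/-- The barycentre `m_p^q` of `μ` restricted to the quantile range `(p,q]`. -/
noncomputable def bary (μ : Measure ℝ) (p q : ℝ) : ℝ :=
  if p < q then (q - p)⁻¹ * mtil μ p q else quantile μ q

/-!
The quantile function pushes Lebesgue measure on `(0,1]` forward to `μ`, so `m̃` is additive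
over adjacent quantile ranges and `m̃_0^1 = ∫ x dμ = 0`. Cutting `(0,1]` at `ρ ≤ π < F(b̄-)`,
the equations defining `ρ` and `π` turn this into
`b ρ + m̃_ρ^π + m̃_{F(b̄-)} = b̄ (1 - F(b̄-) + π)`, whose left side is the first moment of the
unnormalised `ν`.
-/

open Filter Topology ProbabilityTheory

lemma mtil_add_mtil {μ : Measure ℝ} {a b c : ℝ} (hab : a ≤ b) (hbc : b ≤ c)
    (h : IntegrableOn (quantile μ) (Ioc a c)) :
    mtil μ a b + mtil μ b c = mtil μ a c := by
  rw [mtil, mtil, mtil, ← Ioc_union_Ioc_eq_Ioc hab hbc,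
    setIntegral_union (Ioc_disjoint_Ioc_of_le le_rfl) measurableSet_Ioc
      (h.mono_set (Ioc_subset_Ioc_right hbc)) (h.mono_set (Ioc_subset_Ioc_left hab))]

section Quantile

variable (μ : Measure ℝ) [IsProbabilityMeasure μ]

lemma distF_eq_cdf : distF μ = cdf μ :=
  funext fun x => (cdf_eq_real μ x).symm

lemma monotone_distF : Monotone (distF μ) := by
  rw [distF_eq_cdf]
  exact monotone_cdf μ

variable {μ} {u : ℝ}

lemma bddBelow_le_distF (hu : 0 < u) : BddBelow {x : ℝ | u ≤ distF μ x} := by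
  obtain ⟨y, hy⟩ := ((tendsto_cdf_atBot μ).eventually_lt_const hu).exists
  refine ⟨y, fun z hz => le_of_not_gt fun hzy => ?_⟩
  have := (monotone_distF μ hzy.le).trans_lt (by rwa [distF_eq_cdf])
  exact (hz.trans_lt this).false

lemma nonempty_le_distF (hu : u < 1) : {x : ℝ | u ≤ distF μ x}.Nonempty := by
  obtain ⟨y, hy⟩ := ((tendsto_cdf_atTop μ).eventually_const_lt hu).exists
  exact ⟨y, show u ≤ distF μ y by rw [distF_eq_cdf]; exact hy.le⟩

lemma le_distF_quantile (hu0 : 0 < u) (hu1 : u < 1) : u ≤ distF μ (quantile μ u) := by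
  set q := quantile μ u
  have hright : Tendsto (distF μ) (𝓝[>] q) (𝓝 (distF μ q)) := by
    rw [distF_eq_cdf]
    exact ((cdf μ).right_continuous q).tendsto.mono_left (nhdsWithin_mono q Ioi_subset_Ici_self)
  refine ge_of_tendsto hright ?_
  filter_upwards [self_mem_nhdsWithin] with y hy
  obtain ⟨x, hx, hxy⟩ := (csInf_lt_iff (bddBelow_le_distF hu0) (nonempty_le_distF hu1)).mp hy
  exact hx.trans (monotone_distF μ hxy.le)

lemma quantile_le_iff (hu0 : 0 < u) (hu1 : u < 1) {x : ℝ} :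
    quantile μ u ≤ x ↔ u ≤ distF μ x :=
  ⟨fun h => (le_distF_quantile hu0 hu1).trans (monotone_distF μ h),
    fun h => csInf_le (bddBelow_le_distF hu0) h⟩

lemma monotoneOn_quantile : MonotoneOn (quantile μ) (Ioo 0 1) :=
  fun _ ha _ hb hab => csInf_le_csInf (bddBelow_le_distF ha.1) (nonempty_le_distF hb.2)
    fun _ hx => hab.trans hx

lemma aemeasurable_quantile {p q : ℝ} (hp : 0 ≤ p) (hq : q ≤ 1) :
    AEMeasurable (quantile μ) (volume.restrict (Ioc p q)) := by
  rw [← Measure.restrict_congr_set Ioo_ae_eq_Ioc]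
  exact aemeasurable_restrict_of_monotoneOn measurableSet_Ioo
    (monotoneOn_quantile.mono (Ioo_subset_Ioo hp hq))

variable (μ)

lemma qmeas_zero_one : qmeas μ 0 1 = μ := by
  have hmeas := aemeasurable_quantile (μ := μ) le_rfl le_rfl
  rw [qmeas]
  refine Measure.ext_of_Iic _ _ fun x => ?_
  have hpre : quantile μ ⁻¹' Iic x ∩ Ioo 0 1 = Ioo 0 1 ∩ Iic (distF μ x) := by
    ext u
    simp only [mem_inter_iff, mem_preimage, mem_Iic, and_comm (a := u ∈ Ioo 0 1),
      and_congr_left_iff]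
    exact fun hu => quantile_le_iff hu.1 hu.2
  have hIoo : volume (Ioo 0 1 ∩ Iic (distF μ x)) = volume (Ioc 0 1 ∩ Iic (distF μ x)) :=
    measure_congr (Ioo_ae_eq_Ioc.inter (ae_eq_refl _))
  rw [Measure.map_apply_of_aemeasurable hmeas measurableSet_Iic,
    ← Measure.restrict_congr_set Ioo_ae_eq_Ioc, Measure.restrict_apply' measurableSet_Ioo, hpre,
    hIoo, Ioc_inter_Iic,
    min_eq_right (by rw [distF_eq_cdf]; exact cdf_le_one μ x), Real.volume_Ioc, sub_zero,
    distF_eq_cdf, ofReal_cdf]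

variable {μ}

lemma integrableOn_quantile (hint : Integrable id μ) {p q : ℝ} (hp : 0 ≤ p) (hq : q ≤ 1) :
    IntegrableOn (quantile μ) (Ioc p q) := by
  rw [← qmeas_zero_one μ, qmeas] at hint
  have h01 : IntegrableOn (quantile μ) (Ioc 0 1) :=
    (integrable_map_measure aestronglyMeasurable_id (aemeasurable_quantile le_rfl le_rfl)).mp hint
  exact h01.mono_set (Ioc_subset_Ioc hp hq)

lemma integral_qmeas {p q : ℝ} (hp : 0 ≤ p) (hq : q ≤ 1) :
    ∫ x, x ∂qmeas μ p q = mtil μ p q :=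
  integral_map (aemeasurable_quantile hp hq) aestronglyMeasurable_id

lemma integrable_qmeas (hint : Integrable id μ) {p q : ℝ} (hp : 0 ≤ p) (hq : q ≤ 1) :
    Integrable (fun x => x) (qmeas μ p q) :=
  (integrable_map_measure aestronglyMeasurable_id (aemeasurable_quantile hp hq)).mpr
    (integrableOn_quantile hint hp hq)

lemma mtil_zero_one : mtil μ 0 1 = ∫ x, x ∂μ := by
  conv_rhs => rw [← qmeas_zero_one μ]
  exact (integral_qmeas le_rfl le_rfl).symm

end Quantile

theorem stmt15_general (μ : Measure ℝ) [IsProbabilityMeasure μ]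
    (hint : Integrable id μ) (hcent : ∫ x, x ∂μ = 0)
    (lb ub : ℝ)
    (ρ π : ℝ) (hρ : ρ ∈ Ioc (distF μ lb) 1)
    (hρeq : mtil μ 0 ρ = lb * ρ)
    (hπ : π ∈ Ico ρ (distFm μ ub))
    (heq : mtil μ π (distFm μ ub) + ub * (1 - distFm μ ub + π) = 0) :
    (∫ x, x ∂((ENNReal.ofReal (1 - distFm μ ub + π))⁻¹ •
      (ENNReal.ofReal ρ • Measure.dirac lb + qmeas μ ρ π +
        qmeas μ (distFm μ ub) 1))) = ub := by
  set F' := distFm μ ub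
  obtain ⟨hρπ, hπF'⟩ := hπ
  have hρ0 : 0 < ρ := ENNReal.toReal_nonneg.trans_lt hρ.1
  have hF'1 : F' ≤ 1 := measureReal_le_one
  have hI := integrableOn_quantile hint le_rfl le_rfl
  have hsplit : mtil μ 0 ρ + mtil μ ρ π + mtil μ π F' + mtil μ F' 1 = mtil μ 0 1 := by
    rw [mtil_add_mtil hρ0.le hρπ (hI.mono_set (Ioc_subset_Ioc le_rfl (by linarith))),
      mtil_add_mtil (hρ0.le.trans hρπ) hπF'.le (hI.mono_set (Ioc_subset_Ioc le_rfl hF'1)),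
      mtil_add_mtil (by linarith) hF'1 hI]
  have hmoment : lb * ρ + mtil μ ρ π + mtil μ F' 1 = ub * (1 - F' + π) := by
    rw [mtil_zero_one, hcent, hρeq] at hsplit
    linarith
  have hδ : Integrable (fun x : ℝ => x) (ENNReal.ofReal ρ • Measure.dirac lb) :=
    (integrable_dirac (by simp)).smul_measure ENNReal.ofReal_ne_top
  have hq₁ := integrable_qmeas hint hρ0.le (by linarith : π ≤ 1)
  have hq₂ := integrable_qmeas hint (by linarith : 0 ≤ F') le_rfl
  rw [integral_smul_measure, integral_add_measure (hδ.add_measure hq₁) hq₂,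
    integral_add_measure hδ hq₁, integral_smul_measure, integral_dirac,
    integral_qmeas hρ0.le (by linarith), integral_qmeas (by linarith) le_rfl,
    ENNReal.toReal_inv, ENNReal.toReal_ofReal (by linarith), ENNReal.toReal_ofReal hρ0.le,
    smul_eq_mul, smul_eq_mul, mul_comm ρ, hmoment]
  field_simp [show 1 - F' + π ≠ 0 by linarith]

theorem stmt15 (μ : Measure ℝ) [IsProbabilityMeasure μ]
    (hint : Integrable id μ) (hcent : ∫ x, x ∂μ = 0)
    (lb ub : ℝ) (hlb : lb < 0) (hub : 0 < ub)
    (ρ π : ℝ) (hρ : ρ ∈ Ioc (distF μ lb) 1)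
    (hρeq : mtil μ 0 ρ = lb * ρ)
    (hπ : π ∈ Ico ρ (distFm μ ub))
    (heq : mtil μ π (distFm μ ub) + ub * (1 - distFm μ ub + π) = 0) :
    (∫ x, x ∂((ENNReal.ofReal (1 - distFm μ ub + π))⁻¹ •
      (ENNReal.ofReal ρ • Measure.dirac lb + qmeas μ ρ π +
        qmeas μ (distFm μ ub) 1))) = ub :=
  stmt15_general μ hint hcent lb ub ρ π hρ hρeq hπ heq
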